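/- On ℝ³ with coordinates (x,y,u), define the polynomial vector fields e₁ = (1 + x − y − (10/9)u)∂ₓ + ((10/9)x − y − (10/9)u)∂_y + (x + 2u)∂ᵤ and e₂ = (−2x + u)∂ₓ + (1 − (4/3)x − y + (8/9)u)∂_y − 3u∂ᵤ. Then their Lie bracket satisfies [e₁,e₂] = −e₁ − (1/3)e₂. In particular e₁, e₂ span a 2-dimensional solvable Lie algebra of vector fields on ℝ³. -/
import Mathlib


/-- Lie bracket of two vector fields `V, W : ℝ³ → ℝ³`:
`[V,W](p) = DW(p)·V(p) − DV(p)·W(p)`. -/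
noncomputable def lieBracket (V W : ℝ × ℝ × ℝ → ℝ × ℝ × ℝ) : ℝ × ℝ × ℝ → ℝ × ℝ × ℝ :=
  fun p => fderiv ℝ W p (V p) - fderiv ℝ V p (W p)

/-- `e₁ = (1 + x − y − (10/9)u)∂ₓ + ((10/9)x − y − (10/9)u)∂_y + (x + 2u)∂ᵤ`. -/
noncomputable def e1Cubic : ℝ × ℝ × ℝ → ℝ × ℝ × ℝ := fun p =>
  (1 + p.1 - p.2.1 - (10 / 9) * p.2.2,
   (10 / 9) * p.1 - p.2.1 - (10 / 9) * p.2.2,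
   p.1 + 2 * p.2.2)

/-- `e₂ = (−2x + u)∂ₓ + (1 − (4/3)x − y + (8/9)u)∂_y − 3u∂ᵤ`. -/
noncomputable def e2Cubic : ℝ × ℝ × ℝ → ℝ × ℝ × ℝ := fun p =>
  (-2 * p.1 + p.2.2,
   1 - (4 / 3) * p.1 - p.2.1 + (8 / 9) * p.2.2,
   -3 * p.2.2)


noncomputable def π1 : (ℝ × ℝ × ℝ) →L[ℝ] ℝ := ContinuousLinearMap.fst ℝ ℝ (ℝ × ℝ)
noncomputable def π2 : (ℝ × ℝ × ℝ) →L[ℝ] ℝ :=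
  (ContinuousLinearMap.fst ℝ ℝ ℝ).comp (ContinuousLinearMap.snd ℝ ℝ (ℝ × ℝ))
noncomputable def π3 : (ℝ × ℝ × ℝ) →L[ℝ] ℝ :=
  (ContinuousLinearMap.snd ℝ ℝ ℝ).comp (ContinuousLinearMap.snd ℝ ℝ (ℝ × ℝ))

noncomputable def L1 : (ℝ × ℝ × ℝ) →L[ℝ] (ℝ × ℝ × ℝ) :=
  (π1 - π2 - (10/9 : ℝ) • π3).prod (((10/9 : ℝ) • π1 - π2 - (10/9 : ℝ) • π3).prod (π1 + (2:ℝ) • π3))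

noncomputable def L2 : (ℝ × ℝ × ℝ) →L[ℝ] (ℝ × ℝ × ℝ) :=
  ((-2 : ℝ) • π1 + π3).prod ((-(4/3 : ℝ) • π1 - π2 + (8/9 : ℝ) • π3).prod ((-3 : ℝ) • π3))

lemma hd1 (p : ℝ × ℝ × ℝ) : HasFDerivAt e1Cubic L1 p := by
  have : e1Cubic = fun q => ((1:ℝ),(0:ℝ),(0:ℝ)) + L1 q := by
    funext q
    ext <;> simp [e1Cubic, L1, π1, π2, π3] <;> ring
  rw [this]
  exact L1.hasFDerivAt.const_add _

lemma hd2 (p : ℝ × ℝ × ℝ) : HasFDerivAt e2Cubic L2 p := by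
  have : e2Cubic = fun q => ((0:ℝ),(1:ℝ),(0:ℝ)) + L2 q := by
    funext q
    ext <;> simp [e2Cubic, L2, π1, π2, π3] <;> ring
  rw [this]
  exact L2.hasFDerivAt.const_add _

/-- `[e₁,e₂] = −e₁ − (1/3)e₂`; in particular `e₁, e₂` span a 2-dimensional solvable Lie
algebra of vector fields on `ℝ³`. -/
theorem branch_F31_symmetry_algebra :
    (∀ p : ℝ × ℝ × ℝ,
      lieBracket e1Cubic e2Cubic p = - e1Cubic p - (1 / 3 : ℝ) • e2Cubic p) ∧
    LinearIndependent ℝ ![e1Cubic, e2Cubic] := by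
  constructor
  · intro p
    rw [lieBracket, (hd1 p).fderiv, (hd2 p).fderiv]
    ext <;> simp [e1Cubic, e2Cubic, L1, L2, π1, π2, π3] <;> ring
  · rw [LinearIndependent.pair_iff]
    intro s t h
    have h0 := congrFun h (0,0,0)
    simp [e1Cubic, e2Cubic, Prod.ext_iff] at h0
    exact ⟨h0.1, h0.2⟩
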